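/- arXiv:2407.16491 — 2 statements merged into one kernel-verified Lean document; each statement's English description precedes it below -/
import Mathlib

section
/- Soundness of the DAG Canadian Traveller dynamic program (one direction of Lemma 2): in the Canadian Traveller game on a weighted DAG G with source s, sink t, and Blocker budget k, if π_k(s) ≤ T then Traveller has a strategy guaranteeing arrival at t with total cost at most T. -/
/-- The `(j+1)`-th smallest element of a multiset of extended naturals, taken as
`⊤` when the multiset has at most `j` elements. -/
def kthSmallest (s : Multiset ℕ∞) (j : ℕ) : ℕ∞ :=
  (s.sort (· ≤ ·)).getD j ⊤

/-- The multiset of values `f(head e) + len e` over the arcs `e` leaving `v`. -/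
def outVals {V ι : Type*} [DecidableEq V] (E : Finset ι) (tail head : ι → V)
    (len : ι → ℕ) (f : V → ℕ∞) (v : V) : Multiset ℕ∞ :=
  (E.filter fun e => tail e = v).val.map fun e => f (head e) + (len e : ℕ∞)

/-- `π` satisfies the Canadian Traveller dynamic-programming recursion. -/
def SatisfiesRec {V ι : Type*} [DecidableEq V] (E : Finset ι)
    (tail head : ι → V) (len : ι → ℕ) (t : V) (π : ℕ → V → ℕ∞) : Prop :=
  (∀ i, π i t = 0) ∧
  ∀ i v, v ≠ t →
    π i v = (Finset.range (i + 1)).sup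
      fun m => kthSmallest (outVals E tail head len (π (i - m)) v) m

/-- The digraph is acyclic. -/
def ArcAcyclic {V ι : Type*} (E : Finset ι) (tail head : ι → V) : Prop :=
  ∀ v : V, ¬ Relation.TransGen (fun a b => ∃ e ∈ E, tail e = a ∧ head e = b) v v

/-- Winning positions for Traveller in the Canadian Traveller game on a weighted
digraph: a position records the current vertex, the cost spent so far, the set of
already visited vertices and the set of blocked arcs.  Traveller wins at `t` within
budget `T`; otherwise, upon arrival at `v`, Blocker may permanently block additional
outgoing arcs of `v` (only on a first visit, at most `k` blocked in total), after
which Traveller traverses some unblocked outgoing arc. -/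
inductive DWin {V ι : Type*} [DecidableEq V] [DecidableEq ι]
    (E : Finset ι) (tail head : ι → V) (len : ι → ℕ) (t : V) (k T : ℕ) :
    V → ℕ → Finset V → Finset ι → Prop
  | reach : ∀ (cost : ℕ) (vis : Finset V) (B : Finset ι), cost ≤ T →
      DWin E tail head len t k T t cost vis B
  | move : ∀ (v : V) (cost : ℕ) (vis : Finset V) (B : Finset ι)
      (pick : Finset ι → ι),
      (∀ B' : Finset ι, B ⊆ B' → B'.card ≤ k →
        (∀ f ∈ B' \ B, f ∈ E ∧ tail f = v ∧ v ∉ vis) →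
        pick B' ∈ E ∧ tail (pick B') = v ∧ pick B' ∉ B') →
      (∀ B' : Finset ι, B ⊆ B' → B'.card ≤ k →
        (∀ f ∈ B' \ B, f ∈ E ∧ tail f = v ∧ v ∉ vis) →
        DWin E tail head len t k T (head (pick B')) (cost + len (pick B'))
          (insert v vis) B') →
      DWin E tail head len t k T v cost vis B

/-! Traveller keeps the invariant `cost + π_{k - |B|}(v) ≤ T`, where `B` is the set of arcs
blocked so far.  When Blocker blocks `m` further arcs at `v`, the recursion bounds the
`(m+1)`-th smallest value of `π_{k-|B|-m}(head e) + len e` over the arcs `e` leaving `v` by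
`π_{k-|B|}(v)`; at most `m` of those arcs are blocked, because acyclicity keeps every earlier
blocked arc away from `v`, so one of the `m + 1` best arcs is open and taking it preserves the
invariant.  Acyclicity also makes the induction along the play well founded. -/

theorem succ_le_countP_le_kthSmallest {s : Multiset ℕ∞} {m : ℕ} (h : kthSmallest s m ≠ ⊤) :
    m + 1 ≤ s.countP (· ≤ kthSmallest s m) := by
  set L := s.sort (· ≤ ·)
  have hm : m < L.length := by
    by_contra! hle
    exact h (List.getD_eq_default _ _ hle)
  have hkth : kthSmallest s m = L[m] := by
    rw [kthSmallest, List.getD_eq_getElem?_getD, List.getElem?_eq_getElem hm]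
    rfl
  have hprefix : ∀ x ∈ L.take (m + 1), x ≤ L[m] := by
    intro x hx
    obtain ⟨j, hj, rfl⟩ := List.mem_take_iff_getElem.mp hx
    exact (s.pairwise_sort _).rel_get_of_le (a := ⟨j, hj.trans_le (min_le_right _ _)⟩)
      (b := ⟨m, hm⟩) (by simp only [Fin.mk_le_mk]; omega)
  calc m + 1 = (L.take (m + 1)).countP (· ≤ L[m]) := by
        rw [List.countP_eq_length.mpr (by simpa using hprefix), List.length_take]
        omega
    _ ≤ L.countP (· ≤ L[m]) := (List.take_sublist _ _).countP_le
    _ = s.countP (· ≤ kthSmallest s m) := by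
        conv_rhs => rw [hkth, ← Multiset.sort_eq s (· ≤ ·), Multiset.coe_countP]

theorem exists_mem_notMem_le_kthSmallest {ι : Type*} [DecidableEq ι] {F B : Finset ι}
    {g : ι → ℕ∞} {m : ℕ} (h : kthSmallest (F.val.map g) m ≠ ⊤) (hB : (F ∩ B).card ≤ m) :
    ∃ e ∈ F, e ∉ B ∧ g e ≤ kthSmallest (F.val.map g) m := by
  set c := kthSmallest (F.val.map g) m
  have hcount : m + 1 ≤ (F.filter (g · ≤ c)).card := by
    have := succ_le_countP_le_kthSmallest h
    rw [Multiset.countP_map] at this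
    exact this
  have hnotsub : ¬ F.filter (g · ≤ c) ⊆ B := fun hsub => by
    have := Finset.card_le_card (Finset.subset_inter (Finset.filter_subset _ F) hsub)
    omega
  obtain ⟨e, he, heB⟩ := Finset.not_subset.mp hnotsub
  obtain ⟨heF, hle⟩ := Finset.mem_filter.mp he
  exact ⟨e, heF, heB, hle⟩

theorem SatisfiesRec.exists_open_arc_le {V ι : Type*} [DecidableEq V] [DecidableEq ι]
    {E : Finset ι} {tail head : ι → V} {len : ι → ℕ} {t : V} {π : ℕ → V → ℕ∞}
    (hrec : SatisfiesRec E tail head len t π) {i j : ℕ} {v : V} (hv : v ≠ t)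
    (hfin : π i v ≠ ⊤) (hji : j ≤ i) {B : Finset ι}
    (hB : (E.filter (tail · = v) ∩ B).card ≤ i - j) :
    ∃ e ∈ E, tail e = v ∧ e ∉ B ∧ π j (head e) + len e ≤ π i v := by
  have hkth : kthSmallest (outVals E tail head len (π j) v) (i - j) ≤ π i v := by
    have := Finset.le_sup (f := fun m => kthSmallest (outVals E tail head len (π (i - m)) v) m)
      (Finset.mem_range.mpr (by omega : i - j < i + 1))
    rwa [Nat.sub_sub_self hji, ← hrec.2 i v hv] at this
  obtain ⟨e, he, heB, hle⟩ := exists_mem_notMem_le_kthSmallest (ne_top_of_le_ne_top hfin hkth) hB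
  obtain ⟨heE, hev⟩ := Finset.mem_filter.mp he
  exact ⟨e, heE, hev, heB, hle.trans hkth⟩

section Acyclic

variable {V ι : Type*} {E : Finset ι} {tail head : ι → V}

def ArcAdj (E : Finset ι) (tail head : ι → V) (a b : V) : Prop :=
  ∃ e ∈ E, tail e = a ∧ head e = b

open Classical in
noncomputable def descendants (E : Finset ι) (tail head : ι → V) (v : V) : Finset V :=
  (E.image head).filter (Relation.TransGen (ArcAdj E tail head) v)

theorem ArcAcyclic.card_descendants_lt (hacyc : ArcAcyclic E tail head) {u v : V}
    (h : ArcAdj E tail head v u) :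
    (descendants E tail head u).card < (descendants E tail head v).card := by
  classical
  refine Finset.card_lt_card (Finset.ssubset_iff_of_subset ?_ |>.mpr ⟨u, ?_, ?_⟩)
  · intro w hw
    simp only [descendants, Finset.mem_filter] at hw ⊢
    exact ⟨hw.1, .head h hw.2⟩
  · obtain ⟨e, he, hev, rfl⟩ := h
    simp only [descendants, Finset.mem_filter]
    exact ⟨Finset.mem_image_of_mem head he, .single ⟨e, he, hev, rfl⟩⟩
  · simp only [descendants, Finset.mem_filter, not_and]
    exact fun _ => hacyc u

theorem ArcAcyclic.wellFounded (hacyc : ArcAcyclic E tail head) :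
    WellFounded (flip (ArcAdj E tail head)) :=
  (measure fun v => (descendants E tail head v).card).wf.mono
    fun _ _ h => hacyc.card_descendants_lt h

end Acyclic

theorem SatisfiesRec.exists_open_arc_of_upstream {V ι : Type*} [DecidableEq V] [DecidableEq ι]
    {E : Finset ι} {tail head : ι → V} {len : ι → ℕ} {t : V} {k : ℕ} {π : ℕ → V → ℕ∞}
    (hrec : SatisfiesRec E tail head len t π) (hacyc : ArcAcyclic E tail head) {v : V}
    (hv : v ≠ t) {B B' : Finset ι}
    (hB : ∀ f ∈ B, Relation.TransGen (ArcAdj E tail head) (tail f) v)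
    (hfin : π (k - B.card) v ≠ ⊤) (hsub : B ⊆ B') (hcard : B'.card ≤ k) :
    ∃ e ∈ E, tail e = v ∧ e ∉ B' ∧ π (k - B'.card) (head e) + len e ≤ π (k - B.card) v := by
  have hBB' := Finset.card_le_card hsub
  refine hrec.exists_open_arc_le hv hfin (by omega) ?_
  have hout : E.filter (tail · = v) ∩ B' ⊆ B' \ B := fun e he => by
    simp only [Finset.mem_inter, Finset.mem_filter] at he
    exact Finset.mem_sdiff.mpr ⟨he.2, fun heB => hacyc v (he.1.2 ▸ hB e heB)⟩
  have := Finset.card_le_card hout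
  rw [Finset.card_sdiff_of_subset hsub] at this
  omega

theorem dWin_of_add_le {V ι : Type*} [DecidableEq V] [DecidableEq ι]
    {E : Finset ι} {tail head : ι → V} {len : ι → ℕ} {t : V} {k T : ℕ} {π : ℕ → V → ℕ∞}
    (hacyc : ArcAcyclic E tail head) (hrec : SatisfiesRec E tail head len t π)
    (v : V) (cost : ℕ) (vis : Finset V) (B : Finset ι)
    (hB : ∀ f ∈ B, Relation.TransGen (ArcAdj E tail head) (tail f) v)
    (hcost : (cost : ℕ∞) + π (k - B.card) v ≤ T) :
    DWin E tail head len t k T v cost vis B := by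
  induction v using hacyc.wellFounded.induction generalizing cost vis B with
  | _ v ih => ?_
  by_cases hvt : v = t
  · subst hvt
    exact .reach _ _ _ (by simpa [hrec.1] using hcost)
  have hfin : π (k - B.card) v ≠ ⊤ := fun h => by simp [h] at hcost
  -- `pick` must also be defined on blockings the rules exclude; some arc leaves `v`.
  have : Nonempty ι := by
    obtain ⟨e, -⟩ := hrec.exists_open_arc_le hvt hfin le_rfl (B := ∅) (by simp)
    exact ⟨e⟩
  have hpick (B' : Finset ι) : ∃ e, B ⊆ B' → B'.card ≤ k →
      e ∈ E ∧ tail e = v ∧ e ∉ B' ∧ π (k - B'.card) (head e) + len e ≤ π (k - B.card) v := by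
    by_cases hvalid : B ⊆ B' ∧ B'.card ≤ k
    · obtain ⟨e, he⟩ := hrec.exists_open_arc_of_upstream hacyc hvt hB hfin hvalid.1 hvalid.2
      exact ⟨e, fun _ _ => he⟩
    · exact ⟨Classical.arbitrary ι, fun hsub hcard => absurd ⟨hsub, hcard⟩ hvalid⟩
  choose pick hpick using hpick
  refine .move v cost vis B pick (fun B' hsub hcard _ => ?_) (fun B' hsub hcard hnew => ?_)
  · obtain ⟨heE, hev, heB', -⟩ := hpick B' hsub hcard
    exact ⟨heE, hev, heB'⟩
  obtain ⟨heE, hev, -, hle⟩ := hpick B' hsub hcard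
  have hstep : ArcAdj E tail head v (head (pick B')) := ⟨_, heE, hev, rfl⟩
  refine ih _ hstep _ _ _ (fun f hf => ?_) ?_
  · by_cases hfB : f ∈ B
    · exact (hB f hfB).tail hstep
    · exact (hnew f (Finset.mem_sdiff.mpr ⟨hf, hfB⟩)).2.1 ▸ .single hstep
  · calc ((cost + len (pick B') : ℕ) : ℕ∞) + π (k - B'.card) (head (pick B'))
        = cost + (π (k - B'.card) (head (pick B')) + len (pick B')) := by push_cast; ring
      _ ≤ cost + π (k - B.card) v := by gcongr
      _ ≤ T := hcost

/-- Soundness of the DAG Canadian Traveller dynamic program: if `π` satisfies the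
recursion on the weighted DAG and `π_k(s) ≤ T`, then Traveller has a strategy
guaranteeing arrival at `t` with total cost at most `T` against a Blocker of
budget `k`. -/
theorem dag_ctp_dp_sound {V ι : Type*} [DecidableEq V] [DecidableEq ι]
    (E : Finset ι) (tail head : ι → V) (len : ι → ℕ) (s t : V) (k T : ℕ)
    (π : ℕ → V → ℕ∞)
    (hacyc : ArcAcyclic E tail head)
    (hrec : SatisfiesRec E tail head len t π)
    (hval : π k s ≤ (T : ℕ∞)) :
    DWin E tail head len t k T s 0 ∅ ∅ :=
  dWin_of_add_le hacyc hrec s 0 ∅ ∅ (by simp) (by simpa using hval)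
end

section
/- Completeness of the DAG Canadian Traveller dynamic program (the other direction of Lemma 2): in the Canadian Traveller game on a weighted DAG with source s, sink t, and Blocker budget k, if π_k(s) > T then Blocker has a strategy forcing Traveller either never to reach t or to incur total cost strictly greater than T. -/
/-- Blocker has a winning strategy in the Canadian Traveller game on a weighted
digraph with budgets `k` (blocked arcs) and `T` (Traveller's cost budget): there is
a safety invariant `Safe` on positions, containing the initial position, such that
no safe position is a win for Traveller (`t` reached within cost `T`), and from
every safe position Blocker has a valid permanent declaration (new blocked arcs
leave the current, not yet visited, vertex; at most `k` blocked in total) after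
which every arc Traveller may traverse leads to a safe position. -/
def DBlockerWins {V ι : Type*} [DecidableEq V] [DecidableEq ι]
    (E : Finset ι) (tail head : ι → V) (len : ι → ℕ) (s t : V) (k T : ℕ) :
    Prop :=
  ∃ Safe : V → ℕ → Finset V → Finset ι → Prop,
    Safe s 0 ∅ ∅ ∧
    ∀ v cost vis B, Safe v cost vis B →
      ¬ (v = t ∧ cost ≤ T) ∧
      ∃ B' : Finset ι, B ⊆ B' ∧ B'.card ≤ k ∧
        (∀ f ∈ B' \ B, f ∈ E ∧ tail f = v ∧ v ∉ vis) ∧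
        ∀ e ∈ E, tail e = v → e ∉ B' →
          Safe (head e) (cost + len e) (insert v vis) B'

/-!
Blocker maintains the invariant: with `i` blocks still to spend (`i + |B| ≤ k`),
`T < cost + π_i(v)`, and no vertex reachable from `v` has been visited. At `v ≠ t` he picks
`m ≤ i` attaining the maximum in the recursion and blocks the arcs `vu` with
`π_{i-m}(u) + d(v,u)` below the `(m+1)`-th smallest such value, at most `m` of them, so every
open arc `vw` has `π_i(v) ≤ π_{i-m}(w) + d(v,w)` and the invariant passes to `w` with budget
`i - m`. At `t`, where `π = 0`, the invariant says that the cost already exceeds `T`.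
Acyclicity keeps the current vertex unvisited, which makes the declarations legal.
-/

section

variable {V ι : Type*}

def Arc (E : Finset ι) (tail head : ι → V) (a b : V) : Prop :=
  ∃ e ∈ E, tail e = a ∧ head e = b

def Unvisited (E : Finset ι) (tail head : ι → V) (vis : Finset V) (v : V) : Prop :=
  ∀ u, Relation.ReflTransGen (Arc E tail head) v u → u ∉ vis

theorem Unvisited.insert_head [DecidableEq V] {E : Finset ι} {tail head : ι → V}
    {vis : Finset V} {v : V} (hacyc : ArcAcyclic E tail head)
    (hv : Unvisited E tail head vis v) {e : ι} (he : e ∈ E) (hev : tail e = v) :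
    Unvisited E tail head (insert v vis) (head e) := by
  have harc : Arc E tail head v (head e) := ⟨e, he, hev, rfl⟩
  intro u hu hmem
  rcases Finset.mem_insert.mp hmem with rfl | hvis
  · exact hacyc u (Relation.TransGen.head' harc hu)
  · exact hv u (Relation.ReflTransGen.head harc hu) hvis

theorem card_filter_lt_kthSmallest_le (s : Multiset ℕ∞) (m : ℕ) :
    (s.filter (· < kthSmallest s m)).card ≤ m := by
  set l := s.sort (· ≤ ·)
  have hsorted : l.Pairwise (· ≤ ·) := Multiset.pairwise_sort s _
  have hs : s.filter (· < kthSmallest s m) = ↑(l.filter (· < kthSmallest s m)) := by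
    rw [← Multiset.filter_coe, Multiset.sort_eq]
  rw [hs, Multiset.coe_card]
  rcases lt_or_ge m l.length with hm | hm
  · -- Everything from position `m` on is at least the `m`-th entry, so only `l.take m` survives.
    have hdrop : (l.drop m).filter (· < kthSmallest s m) = [] := by
      have hsd := hsorted.sublist (List.drop_sublist m l)
      rw [List.drop_eq_getElem_cons hm, List.pairwise_cons] at hsd
      have hkth : kthSmallest s m = l[m] := List.getD_eq_getElem _ _ hm
      rw [List.filter_eq_nil_iff, List.drop_eq_getElem_cons hm, hkth]
      rintro x (_ | ⟨_, hx⟩)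
      · simp
      · simpa using hsd.1 x hx
    rw [← List.take_append_drop m l, List.filter_append, hdrop, List.append_nil]
    exact (List.length_filter_le _ _).trans (List.length_take_le _ _)
  · exact (List.length_filter_le _ _).trans hm

theorem SatisfiesRec.exists_block [DecidableEq V] {E : Finset ι} {tail head : ι → V}
    {len : ι → ℕ} {t : V} {π : ℕ → V → ℕ∞} (hrec : SatisfiesRec E tail head len t π)
    (i : ℕ) (v : V) :
    ∃ m ≤ i, ∃ S : Finset ι, S.card ≤ m ∧ (∀ f ∈ S, f ∈ E ∧ tail f = v) ∧
      ∀ e ∈ E, tail e = v → e ∉ S → π i v ≤ π (i - m) (head e) + len e := by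
  by_cases hvt : v = t
  · exact ⟨0, i.zero_le, ∅, le_rfl, by simp, fun _ _ _ _ => by simp [hvt, hrec.1 i]⟩
  obtain ⟨m, hm, hsup⟩ := Finset.exists_mem_eq_sup (Finset.range (i + 1)) (by simp)
    fun m => kthSmallest (outVals E tail head len (π (i - m)) v) m
  have hπv : π i v = kthSmallest (outVals E tail head len (π (i - m)) v) m := by
    rw [hrec.2 i v hvt, hsup]
  set val : ι → ℕ∞ := fun e => π (i - m) (head e) + len e
  refine ⟨m, Nat.lt_succ_iff.mp (Finset.mem_range.mp hm),
    (E.filter (tail · = v)).filter (val · < π i v), ?_, ?_, ?_⟩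
  · have hcard := card_filter_lt_kthSmallest_le (outVals E tail head len (π (i - m)) v) m
    rwa [← hπv, outVals, Multiset.filter_map, Multiset.card_map] at hcard
  · intro f hf
    simpa using (Finset.mem_filter.mp hf).1
  · intro e he hev heS
    simpa [he, hev] using heS

end

/-- Completeness of the DAG Canadian Traveller dynamic program: if `π` satisfies the
recursion on the weighted DAG and `π_k(s) > T`, then Blocker has a strategy forcing
Traveller either never to reach `t` or to incur total cost strictly greater
than `T`. -/
theorem dag_ctp_dp_complete {V ι : Type*} [DecidableEq V] [DecidableEq ι]
    (E : Finset ι) (tail head : ι → V) (len : ι → ℕ) (s t : V) (k T : ℕ)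
    (π : ℕ → V → ℕ∞)
    (hacyc : ArcAcyclic E tail head)
    (hrec : SatisfiesRec E tail head len t π)
    (hval : (T : ℕ∞) < π k s) :
    DBlockerWins E tail head len s t k T := by
  refine ⟨fun v cost vis B => Unvisited E tail head vis v ∧
      ∃ i, i + B.card ≤ k ∧ (T : ℕ∞) < cost + π i v,
    ⟨by simp [Unvisited], k, by simp, by simpa using hval⟩, ?_⟩
  rintro v cost vis B ⟨hfresh, i, hik, hT⟩
  obtain ⟨m, hmi, S, hSm, hSout, hSval⟩ := hrec.exists_block i v
  have hcard : (B ∪ S).card ≤ B.card + m := (Finset.card_union_le B S).trans (by omega)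
  refine ⟨?_, B ∪ S, Finset.subset_union_left, by omega, ?_, ?_⟩
  · rintro ⟨rfl, hle⟩
    rw [hrec.1 i, add_zero, Nat.cast_lt] at hT
    omega
  · intro f hf
    obtain ⟨hfE, hfv⟩ := hSout f (by simp only [Finset.mem_sdiff, Finset.mem_union] at hf; tauto)
    exact ⟨hfE, hfv, hfresh v .refl⟩
  · intro e he hev heB
    refine ⟨hfresh.insert_head hacyc he hev, i - m, by omega, ?_⟩
    calc (T : ℕ∞) < cost + π i v := hT
      _ ≤ cost + (π (i - m) (head e) + len e) := by
        gcongr; exact hSval e he hev fun h => heB (Finset.mem_union_right B h)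
      _ = ↑(cost + len e) + π (i - m) (head e) := by push_cast; ring
end
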